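/- The C4C check is at least as permissive as the eager check: for every closed, well-typed λ_op-quote expression e, if the eager-check elaboration never reaches an error — ⟨⟦e⟧^Eager; [-]; ∅; ∅; ⊤⟩ does not reduce to any ⟨err; E; U; M; I⟩ — then the C4C elaboration never reaches an error either: ⟨⟦e⟧^BE; [-]; ∅; ∅; ⊤⟩ does not reduce to any ⟨err; E'; U'; M'; I'⟩; this holds because a check_M on a normal form n in context E with muted set M fails only if FVs⁰(n) \ M ⊄ π_FVs(E), so check_M can never fail where the corresponding check (which fails iff FVs⁰(n) ⊄ π_FVs(E)) succeeds. -/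
import Mathlib


/- A formalisation of the two-level calculus λ_op-quote (effect handlers,
quotation and splice) and its core language λ_AST(op) (effect handlers, AST
constructors, and dynamic scope-extrusion checking primitives), together with
the mode-indexed elaborations (naïve, lazy, eager, and C4C). -/

namespace MetaLang

abbrev OpName := String
abbrev Eff := Set OpName

/-- Run-time pre-types `R` of λ_AST(op). -/
inductive PreTy : Type
  | nat  : PreTy
  | fn   : PreTy → Eff → PreTy → PreTy
  | cont : PreTy → Eff → PreTy → PreTy

/-- Level 0 (run-time) value types of λ_op-quote. -/
inductive Ty0 : Type
  | nat  : Ty0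
  | fn   : Ty0 → Eff → Ty0 → Ty0
  | cont : Ty0 → Eff → Ty0 → Ty0

/-- Level −1 (compile-time) value types of λ_op-quote. -/
inductive Ty1 : Type
  | nat  : Ty1
  | fn   : Ty1 → Eff → Ty1 → Ty1
  | cont : Ty1 → Eff → Ty1 → Ty1
  | code : Ty0 → Eff → Ty1          -- Code(T⁰ ! ξ)⁻¹

/-- Erasure of level annotations, turning level 0 types into run-time pre-types. -/
def eraseTy : Ty0 → PreTy
  | .nat => .nat
  | .fn S ξ T => .fn (eraseTy S) ξ (eraseTy T)
  | .cont S ξ T => .cont (eraseTy S) ξ (eraseTy T)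

/-- An effect signature: `arg0/res0` type the (run-time) operations occurring
inside quoted code, `arg1/res1` the (compile-time) operations. -/
structure Sig where
  arg0 : OpName → Ty0
  res0 : OpName → Ty0
  arg1 : OpName → Ty1
  res1 : OpName → Ty1

/-! ### Source syntax (de Bruijn, binders annotated with level 0 types) -/

mutual
  inductive SVal : Type
    | var : ℕ → SVal
    | nat : ℕ → SVal
    | lam : Ty0 → SExpr → SVal
  inductive SExpr : Type
    | app    : SVal → SVal → SExpr
    | ret    : SVal → SExpr
    | seq    : Ty0 → SExpr → SExpr → SExpr     -- do x : T ← e₁ in e₂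
    | op     : OpName → SVal → SExpr
    | handle : SExpr → SHandler → SExpr
    | resume : SVal → SVal → SExpr
    | quote  : SExpr → SExpr                    -- ⟨⟨e⟩⟩
    | splice : SExpr → SExpr                    -- $(e)
  inductive SHandler : Type
    | retH : Ty0 → SExpr → SHandler
    | opH  : SHandler → OpName → Ty0 → Ty0 → SExpr → SHandler
      -- h; op(x : A, k : (B ⇒ξ T)) ↦ e  (annotations record the types of x and k)
end

/-! ### Core syntax of λ_AST(op) -/

/-- Classifier-free formal parameters are pairs of a name and a pre-type. -/
abbrev FPv := ℕ × PreTy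

mutual
  /-- Normal forms. -/
  inductive NF : Type
    | var     : ℕ → NF
    | nat     : ℕ → NF
    | lam     : Tm → NF
    | kont    : Tm → NF
    | fp      : ℕ → PreTy → NF            -- a formal parameter α_R
    | astNat  : ℕ → NF
    | astVar  : NF → NF
    | astLam  : NF → NF → NF
    | astApp  : NF → NF → NF
    | astCont : NF → NF → NF
    | astRet  : NF → NF
    | astDo   : NF → NF → NF → NF          -- Do(c₁, x, c₂)
    | astOp   : OpName → NF → NF
    | astHwith : NF → NF → NF
    | astHret  : NF → NF → NF
    | astHop   : NF → OpName → NF → NF → NF → NF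
  /-- Terms. -/
  inductive Tm : Type
    | app    : NF → NF → Tm
    | ret    : NF → Tm
    | seq    : Tm → Tm → Tm
    | op     : OpName → NF → Tm
    | handle : Tm → Hd → Tm
    | resume : NF → NF → Tm
    | check  : NF → Tm
    | checkM : NF → Tm
    | mkvar  : PreTy → Tm
    | dlet   : NF → Tm → Tm
    | tls    : Tm → Tm
    | err    : Tm
  /-- Handlers. -/
  inductive Hd : Type
    | retH : Tm → Hd
    | opH  : Hd → OpName → Tm → Hd
end

def liftR (f : ℕ → ℕ) : ℕ → ℕ
  | 0 => 0
  | n + 1 => f n + 1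

mutual
  def NF.rename : NF → (ℕ → ℕ) → NF
    | .var n, f => .var (f n)
    | .nat m, _ => .nat m
    | .lam t, f => .lam (t.rename (liftR f))
    | .kont t, f => .kont (t.rename (liftR f))
    | .fp a R, _ => .fp a R
    | .astNat m, _ => .astNat m
    | .astVar n, f => .astVar (n.rename f)
    | .astLam n₁ n₂, f => .astLam (n₁.rename f) (n₂.rename f)
    | .astApp n₁ n₂, f => .astApp (n₁.rename f) (n₂.rename f)
    | .astCont n₁ n₂, f => .astCont (n₁.rename f) (n₂.rename f)
    | .astRet n, f => .astRet (n.rename f)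
    | .astDo n₁ n₂ n₃, f => .astDo (n₁.rename f) (n₂.rename f) (n₃.rename f)
    | .astOp o n, f => .astOp o (n.rename f)
    | .astHwith n₁ n₂, f => .astHwith (n₁.rename f) (n₂.rename f)
    | .astHret n₁ n₂, f => .astHret (n₁.rename f) (n₂.rename f)
    | .astHop n₁ o n₂ n₃ n₄, f =>
        .astHop (n₁.rename f) o (n₂.rename f) (n₃.rename f) (n₄.rename f)
  def Tm.rename : Tm → (ℕ → ℕ) → Tm
    | .app n₁ n₂, f => .app (n₁.rename f) (n₂.rename f)
    | .ret n, f => .ret (n.rename f)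
    | .seq t₁ t₂, f => .seq (t₁.rename f) (t₂.rename (liftR f))
    | .op o n, f => .op o (n.rename f)
    | .handle t h, f => .handle (t.rename f) (h.rename f)
    | .resume n₁ n₂, f => .resume (n₁.rename f) (n₂.rename f)
    | .check n, f => .check (n.rename f)
    | .checkM n, f => .checkM (n.rename f)
    | .mkvar R, _ => .mkvar R
    | .dlet n t, f => .dlet (n.rename f) (t.rename f)
    | .tls t, f => .tls (t.rename f)
    | .err, _ => .err
  def Hd.rename : Hd → (ℕ → ℕ) → Hd
    | .retH t, f => .retH (t.rename (liftR f))
    | .opH h o t, f => .opH (h.rename f) o (t.rename (liftR (liftR f)))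
end

def liftS (σ : ℕ → NF) : ℕ → NF
  | 0 => .var 0
  | n + 1 => (σ n).rename Nat.succ

mutual
  def NF.subst : NF → (ℕ → NF) → NF
    | .var n, σ => σ n
    | .nat m, _ => .nat m
    | .lam t, σ => .lam (t.subst (liftS σ))
    | .kont t, σ => .kont (t.subst (liftS σ))
    | .fp a R, _ => .fp a R
    | .astNat m, _ => .astNat m
    | .astVar n, σ => .astVar (n.subst σ)
    | .astLam n₁ n₂, σ => .astLam (n₁.subst σ) (n₂.subst σ)
    | .astApp n₁ n₂, σ => .astApp (n₁.subst σ) (n₂.subst σ)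
    | .astCont n₁ n₂, σ => .astCont (n₁.subst σ) (n₂.subst σ)
    | .astRet n, σ => .astRet (n.subst σ)
    | .astDo n₁ n₂ n₃, σ => .astDo (n₁.subst σ) (n₂.subst σ) (n₃.subst σ)
    | .astOp o n, σ => .astOp o (n.subst σ)
    | .astHwith n₁ n₂, σ => .astHwith (n₁.subst σ) (n₂.subst σ)
    | .astHret n₁ n₂, σ => .astHret (n₁.subst σ) (n₂.subst σ)
    | .astHop n₁ o n₂ n₃ n₄, σ =>
        .astHop (n₁.subst σ) o (n₂.subst σ) (n₃.subst σ) (n₄.subst σ)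
  def Tm.subst : Tm → (ℕ → NF) → Tm
    | .app n₁ n₂, σ => .app (n₁.subst σ) (n₂.subst σ)
    | .ret n, σ => .ret (n.subst σ)
    | .seq t₁ t₂, σ => .seq (t₁.subst σ) (t₂.subst (liftS σ))
    | .op o n, σ => .op o (n.subst σ)
    | .handle t h, σ => .handle (t.subst σ) (h.subst σ)
    | .resume n₁ n₂, σ => .resume (n₁.subst σ) (n₂.subst σ)
    | .check n, σ => .check (n.subst σ)
    | .checkM n, σ => .checkM (n.subst σ)
    | .mkvar R, _ => .mkvar R
    | .dlet n t, σ => .dlet (n.subst σ) (t.subst σ)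
    | .tls t, σ => .tls (t.subst σ)
    | .err, _ => .err
  def Hd.subst : Hd → (ℕ → NF) → Hd
    | .retH t, σ => .retH (t.subst (liftS σ))
    | .opH h o t, σ => .opH (h.subst σ) o (t.subst (liftS (liftS σ)))
end

def Tm.subst1 (t : Tm) (n : NF) : Tm :=
  t.subst fun i => match i with | 0 => n | i + 1 => .var i

def Tm.subst2 (t : Tm) (nk nx : NF) : Tm :=
  t.subst fun i => match i with | 0 => nk | 1 => nx | i + 2 => .var i

def Hd.dom : Hd → Eff
  | .retH _ => ∅
  | .opH h o _ => insert o h.dom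

def Hd.retClause : Hd → Tm
  | .retH t => t
  | .opH h _ _ => h.retClause

def Hd.lookup : Hd → OpName → Option Tm
  | .retH _, _ => none
  | .opH h o t, o' => if o = o' then some t else h.lookup o'

/-- The binding position of an AST binder, viewed as a (singleton or empty)
set of formal parameters. -/
def NF.asParam : NF → Set FPv
  | .fp a R => {(a, R)}
  | _ => ∅

mutual
  /-- `FVs⁰(n)`: the free `Var`s of a normal form. -/
  def NF.fvs : NF → Set FPv
    | .var _ => ∅
    | .nat _ => ∅
    | .lam t => t.fvs
    | .kont t => t.fvs
    | .fp _ _ => ∅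
    | .astNat _ => ∅
    | .astVar n => n.asParam ∪ n.fvs
    | .astLam n₁ n₂ => n₂.fvs \ n₁.asParam
    | .astApp n₁ n₂ => n₁.fvs ∪ n₂.fvs
    | .astCont n₁ n₂ => n₁.fvs ∪ n₂.fvs
    | .astRet n => n.fvs
    | .astDo n₁ n₂ n₃ => n₁.fvs ∪ (n₃.fvs \ n₂.asParam)
    | .astOp _ n => n.fvs
    | .astHwith n₁ n₂ => n₁.fvs ∪ n₂.fvs
    | .astHret n₁ n₂ => n₂.fvs \ n₁.asParam
    | .astHop n₁ _ n₂ n₃ n₄ => n₁.fvs ∪ (n₄.fvs \ (n₂.asParam ∪ n₃.asParam))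
  def Tm.fvs : Tm → Set FPv
    | .app n₁ n₂ => n₁.fvs ∪ n₂.fvs
    | .ret n => n.fvs
    | .seq t₁ t₂ => t₁.fvs ∪ t₂.fvs
    | .op _ n => n.fvs
    | .handle t h => t.fvs ∪ h.fvs
    | .resume n₁ n₂ => n₁.fvs ∪ n₂.fvs
    | .check n => n.fvs
    | .checkM n => n.fvs
    | .mkvar _ => ∅
    | .dlet n t => t.fvs \ n.asParam
    | .tls t => t.fvs
    | .err => ∅
  def Hd.fvs : Hd → Set FPv
    | .retH t => t.fvs
    | .opH h _ t => h.fvs ∪ t.fvs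
end

end MetaLang

namespace MetaLang

/-! ### Operational semantics of λ_AST(op) -/

/-- Evaluation frames. -/
inductive CFrame : Type
  | seqF    : Tm → CFrame                 -- do x ← [-] in t₂
  | handleF : Hd → CFrame                 -- handle [-] with h
  | dletF   : ℕ → PreTy → CFrame          -- dlet(α_R, [-])
  | tlsF    : CFrame                      -- tls([-])

/-- Evaluation contexts, as stacks of frames (head innermost). -/
abbrev CCtx := List CFrame

def plugCF : CFrame → Tm → Tm
  | .seqF t₂, t => .seq t t₂
  | .handleF h, t => .handle t h
  | .dletF a R, t => .dlet (.fp a R) t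
  | .tlsF, t => .tls t

/-- `E[t]`. -/
def plugC : CCtx → Tm → Tm
  | [], t => t
  | F :: E, t => plugC E (plugCF F t)

def handledC : CCtx → Eff
  | [] => ∅
  | .handleF h :: E => handledC E ∪ h.dom
  | _ :: E => handledC E

/-- `π_FVs(E)`: the variables declared safe by `dlet` frames in an
evaluation context. -/
def piFVs : CCtx → Set FPv
  | [] => ∅
  | .dletF a R :: E => insert (a, R) (piFVs E)
  | _ :: E => piFVs E

/-- A deterministic source of fresh formal-parameter names. -/
def next (U : Finset ℕ) : ℕ := (U.sup id) + 1

/-- Configurations `⟨t; E; U; M; I⟩` of λ_AST(op). -/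
structure Cfg : Type where
  tm : Tm
  ctx : CCtx
  used : Finset ℕ
  muted : Set FPv
  mark : WithTop ℕ

/-- The small-step operational semantics of λ_AST(op). -/
inductive CStep : Cfg → Cfg → Prop
  | app {t : Tm} {n : NF} {E U M I} :
      CStep ⟨.app (.lam t) n, E, U, M, I⟩ ⟨t.subst1 n, E, U, M, I⟩
  | seq {n : NF} {t : Tm} {E U M I} :
      CStep ⟨.seq (.ret n) t, E, U, M, I⟩ ⟨t.subst1 n, E, U, M, I⟩
  | hdl {n : NF} {h : Hd} {E U M I} :
      CStep ⟨.handle (.ret n) h, E, U, M, I⟩ ⟨h.retClause.subst1 n, E, U, M, I⟩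
  | pushSeq {t₁ t₂ : Tm} {E U M I} :
      CStep ⟨.seq t₁ t₂, E, U, M, I⟩ ⟨t₁, .seqF t₂ :: E, U, M, I⟩
  | pushHandle {t : Tm} {h : Hd} {E U M I} :
      CStep ⟨.handle t h, E, U, M, I⟩ ⟨t, .handleF h :: E, U, M, I⟩
  | pushDlet {a R t E U M I} :
      CStep ⟨.dlet (.fp a R) t, E, U, M, I⟩ ⟨t, .dletF a R :: E, U, M, I⟩
  | pushTls {t E U M I} :
      CStep ⟨.tls t, E, U, M, I⟩ ⟨t, .tlsF :: E, U, M, I⟩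
  | popSeq {n : NF} {t₂ : Tm} {E U M I} :
      CStep ⟨.ret n, .seqF t₂ :: E, U, M, I⟩ ⟨.seq (.ret n) t₂, E, U, M, I⟩
  | popHandle {n : NF} {h : Hd} {E U M I} :
      CStep ⟨.ret n, .handleF h :: E, U, M, I⟩ ⟨.handle (.ret n) h, E, U, M, I⟩
  | gen {R : PreTy} {E U M I} :
      CStep ⟨.mkvar R, E, U, M, I⟩
            ⟨.ret (.fp (next U) R), E, insert (next U) U, M, I⟩
  | chs {n : NF} {E U M I} :
      n.fvs ⊆ piFVs E →
      CStep ⟨.check n, E, U, M, I⟩ ⟨.ret n, E, U, M, I⟩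
  | chf {n : NF} {E U M I} :
      ¬ n.fvs ⊆ piFVs E →
      CStep ⟨.check n, E, U, M, I⟩ ⟨.err, E, U, M, I⟩
  | cms {n : NF} {E U M I} :
      n.fvs \ M ⊆ piFVs E →
      CStep ⟨.checkM n, E, U, M, I⟩ ⟨.ret n, E, U, M, I⟩
  | cmf {n : NF} {E U M I} :
      ¬ n.fvs \ M ⊆ piFVs E →
      CStep ⟨.checkM n, E, U, M, I⟩ ⟨.err, E, U, M, I⟩
  | tls {n : NF} {E U M I} :
      CStep ⟨.ret n, .tlsF :: E, U, M, I⟩ ⟨.ret n, E, U, ∅, ⊤⟩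
  | dlt {n : NF} {a R E U M} {I : WithTop ℕ} :
      CStep ⟨.ret n, .dletF a R :: E, U, M, I⟩
            ⟨.ret n, E, U,
              if (E.length : WithTop ℕ) > I then M else ∅,
              if (E.length : WithTop ℕ) > I then I else ⊤⟩
  | op {h : Hd} {o : OpName} {n : NF} {t : Tm} (E₁ E₂ : CCtx) {U M} {I : WithTop ℕ} :
      h.lookup o = some t →
      o ∉ handledC E₂ →
      CStep ⟨.op o n, E₂ ++ .handleF h :: E₁, U, M, I⟩
            ⟨t.subst2 (.kont (.handle (plugC E₂ (.ret (.var 0))) h)) n,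
              E₁, U, M ∪ piFVs E₂, min (E₁.length : WithTop ℕ) I⟩
  | resume {t : Tm} {n : NF} {E U M I} :
      CStep ⟨.resume (.kont t) n, E, U, M, I⟩ ⟨t.subst1 n, E, U, M, I⟩

/-- Iterated reduction. -/
abbrev CSteps : Cfg → Cfg → Prop := Relation.ReflTransGen CStep

/-- The initial configuration for a core term. -/
def initCfg (t : Tm) : Cfg := ⟨t, [], ∅, ∅, ⊤⟩

/-- Divergence of a configuration. -/
def CDiverges (k : Cfg) : Prop :=
  ∃ f : ℕ → Cfg, f 0 = k ∧ ∀ n, CStep (f n) (f (n + 1))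

/-- A configuration reaches the scope-extrusion error state. -/
def ReachesErr (t : Tm) : Prop :=
  ∃ (E : CCtx) (U : Finset ℕ) (M : Set FPv) (I : WithTop ℕ),
    CSteps (initCfg t) ⟨.err, E, U, M, I⟩

/-- A normal form that is an AST (i.e. is of AST type). -/
def NF.isAST : NF → Prop
  | .astNat _ => True
  | .astVar _ => True
  | .astLam _ _ => True
  | .astApp _ _ => True
  | .astCont _ _ => True
  | .astRet _ => True
  | .astDo _ _ _ => True
  | .astOp _ _ => True
  | .astHwith _ _ => True
  | .astHret _ _ => True
  | .astHop _ _ _ _ _ => True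
  | _ => False

/-- **Lazy scope extrusion** (Definition 4.3): the configuration returns, under
a top-level splice, an AST some of whose free variables are not declared safe. -/
def LazySE (k : Cfg) : Prop :=
  ∃ (n : NF) (E' : CCtx),
    k.tm = .ret n ∧ n.isAST ∧ k.ctx = .tlsF :: E' ∧ ¬ n.fvs ⊆ piFVs k.ctx

/-- **Eager scope extrusion** (Definition 4.5): the configuration returns an
AST some of whose free variables are not declared safe. -/
def EagerSE (k : Cfg) : Prop :=
  ∃ n : NF, k.tm = .ret n ∧ n.isAST ∧ ¬ n.fvs ⊆ piFVs k.ctx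

/-- **Inevitable scope extrusion** (Definition 4.7): the configuration must
reduce to a configuration exhibiting lazy scope extrusion. -/
def InevitableSE (k : Cfg) : Prop :=
  ∃ k' : Cfg, CSteps k k' ∧ LazySE k'

end MetaLang

namespace MetaLang

/-! ### Types and typing of λ_AST(op) -/

/-- Core types of λ_AST(op). -/
inductive CTy : Type
  | nat    : CTy
  | fn     : CTy → Eff → CTy → CTy
  | cont   : CTy → Eff → CTy → CTy
  | fparam : PreTy → CTy                          -- FParam(R)
  | astV   : PreTy → CTy                          -- AST(R)
  | astC   : PreTy → Eff → CTy                    -- AST(R ! ξ)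
  | astH   : PreTy → Eff → PreTy → Eff → CTy      -- AST(Q!ξ₁ ⇒ R!ξ₂)

/-- Types of AST kind. -/
def CTy.isAST : CTy → Prop
  | .astV _ => True
  | .astC _ _ => True
  | .astH _ _ _ _ => True
  | _ => False

/-- Elaboration of level −1 types into core types. -/
def elabTy1 : Ty1 → CTy
  | .nat => .nat
  | .fn S Δ T => .fn (elabTy1 S) Δ (elabTy1 T)
  | .cont S Δ T => .cont (elabTy1 S) Δ (elabTy1 T)
  | .code T ξ => .astC (eraseTy T) ξ

abbrev CTCtx := List CTy

mutual
  /-- Core typing of normal forms: `Γ ⊢ n : T`. -/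
  inductive NTy : Sig → CTCtx → NF → CTy → Prop
    | var {Sg Γ i T} : Γ[i]? = some T → NTy Sg Γ (.var i) T
    | nat {Sg Γ m} : NTy Sg Γ (.nat m) .nat
    | lam {Sg Γ S T Δ t} :
        TTy Sg (S :: Γ) t T Δ → NTy Sg Γ (.lam t) (.fn S Δ T)
    | kont {Sg Γ S T Δ t} :
        TTy Sg (S :: Γ) t T Δ → NTy Sg Γ (.kont t) (.cont S Δ T)
    | fp {Sg Γ a R} : NTy Sg Γ (.fp a R) (.fparam R)
    | astNat {Sg Γ m} : NTy Sg Γ (.astNat m) (.astV .nat)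
    | astVar {Sg Γ n R} :
        NTy Sg Γ n (.fparam R) → NTy Sg Γ (.astVar n) (.astV R)
    | astLam {Sg Γ n₁ n₂ Q R ξ} :
        NTy Sg Γ n₁ (.fparam Q) → NTy Sg Γ n₂ (.astC R ξ) →
        NTy Sg Γ (.astLam n₁ n₂) (.astV (.fn Q ξ R))
    | astApp {Sg Γ n₁ n₂ Q R ξ} :
        NTy Sg Γ n₁ (.astV (.fn Q ξ R)) → NTy Sg Γ n₂ (.astV Q) →
        NTy Sg Γ (.astApp n₁ n₂) (.astC R ξ)
    | astCont {Sg Γ n₁ n₂ Q R ξ} :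
        NTy Sg Γ n₁ (.astV (.cont Q ξ R)) → NTy Sg Γ n₂ (.astV Q) →
        NTy Sg Γ (.astCont n₁ n₂) (.astC R ξ)
    | astRet {Sg Γ n R ξ} :
        NTy Sg Γ n (.astV R) → NTy Sg Γ (.astRet n) (.astC R ξ)
    | astDo {Sg Γ n₁ n₂ n₃ Q R ξ} :
        NTy Sg Γ n₁ (.astC Q ξ) → NTy Sg Γ n₂ (.fparam Q) →
        NTy Sg Γ n₃ (.astC R ξ) →
        NTy Sg Γ (.astDo n₁ n₂ n₃) (.astC R ξ)
    | astOp {Sg Γ o n ξ} :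
        NTy Sg Γ n (.astV (eraseTy (Sg.arg0 o))) → o ∈ ξ →
        NTy Sg Γ (.astOp o n) (.astC (eraseTy (Sg.res0 o)) ξ)
    | astHwith {Sg Γ n₁ n₂ Q R ξ₁ ξ₂} :
        NTy Sg Γ n₁ (.astC Q ξ₁) → NTy Sg Γ n₂ (.astH Q ξ₁ R ξ₂) →
        NTy Sg Γ (.astHwith n₁ n₂) (.astC R ξ₂)
    | astHret {Sg Γ n₁ n₂ Q R ξ₁ ξ₂} :
        NTy Sg Γ n₁ (.fparam Q) → NTy Sg Γ n₂ (.astC R ξ₂) →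
        NTy Sg Γ (.astHret n₁ n₂) (.astH Q ξ₁ R ξ₂)
    | astHop {Sg Γ n₁ o n₂ n₃ n₄ Q R ξ₁ ξ₂} :
        NTy Sg Γ n₁ (.astH Q ξ₁ R ξ₂) →
        NTy Sg Γ n₂ (.fparam (eraseTy (Sg.arg0 o))) →
        NTy Sg Γ n₃ (.fparam (.cont (eraseTy (Sg.res0 o)) ξ₂ R)) →
        NTy Sg Γ n₄ (.astC R ξ₂) →
        ξ₁ ⊆ ξ₂ ∪ {o} →
        NTy Sg Γ (.astHop n₁ o n₂ n₃ n₄) (.astH Q ξ₁ R ξ₂)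
  /-- Core typing of terms: `Γ ⊢ t : T ! Δ`. -/
  inductive TTy : Sig → CTCtx → Tm → CTy → Eff → Prop
    | app {Sg Γ S T Δ n₁ n₂} :
        NTy Sg Γ n₁ (.fn S Δ T) → NTy Sg Γ n₂ S → TTy Sg Γ (.app n₁ n₂) T Δ
    | resume {Sg Γ S T Δ n₁ n₂} :
        NTy Sg Γ n₁ (.cont S Δ T) → NTy Sg Γ n₂ S → TTy Sg Γ (.resume n₁ n₂) T Δ
    | ret {Sg Γ T Δ n} : NTy Sg Γ n T → TTy Sg Γ (.ret n) T Δ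
    | seq {Sg Γ S T Δ t₁ t₂} :
        TTy Sg Γ t₁ S Δ → TTy Sg (S :: Γ) t₂ T Δ → TTy Sg Γ (.seq t₁ t₂) T Δ
    | op {Sg Γ Δ o n} :
        NTy Sg Γ n (elabTy1 (Sg.arg1 o)) → o ∈ Δ →
        TTy Sg Γ (.op o n) (elabTy1 (Sg.res1 o)) Δ
    | handle {Sg Γ S T Δ₁ Δ₂ t h} :
        TTy Sg Γ t S Δ₁ → HTy Sg Γ h S Δ₁ T Δ₂ →
        (∀ o ∈ Δ₁, o ∉ Δ₂ → o ∈ h.dom) →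
        TTy Sg Γ (.handle t h) T Δ₂
    | check {Sg Γ T Δ n} :
        NTy Sg Γ n T → T.isAST → TTy Sg Γ (.check n) T Δ
    | checkM {Sg Γ T Δ n} :
        NTy Sg Γ n T → T.isAST → TTy Sg Γ (.checkM n) T Δ
    | mkvar {Sg Γ R Δ} : TTy Sg Γ (.mkvar R) (.fparam R) Δ
    | dlet {Sg Γ T Δ R n t} :
        NTy Sg Γ n (.fparam R) → TTy Sg Γ t T Δ → TTy Sg Γ (.dlet n t) T Δ
    | tls {Sg Γ T Δ t} : TTy Sg Γ t T Δ → TTy Sg Γ (.tls t) T Δ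
    | err {Sg Γ T Δ} : TTy Sg Γ .err T Δ
  /-- Core typing of handlers: `Γ ⊢ h : S!Δ₁ ⇒ T!Δ₂`. -/
  inductive HTy : Sig → CTCtx → Hd → CTy → Eff → CTy → Eff → Prop
    | retH {Sg Γ S T Δ₁ Δ₂ t} :
        TTy Sg (S :: Γ) t T Δ₂ → HTy Sg Γ (.retH t) S Δ₁ T Δ₂
    | opH {Sg Γ S T Δ₁ Δ₂ o h t} :
        HTy Sg Γ h S Δ₁ T Δ₂ →
        TTy Sg (CTy.cont (elabTy1 (Sg.res1 o)) Δ₂ T :: elabTy1 (Sg.arg1 o) :: Γ) t T Δ₂ →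
        Δ₁ ⊆ Δ₂ ∪ {o} →
        o ∉ h.dom →
        HTy Sg Γ (.opH h o t) S Δ₁ T Δ₂
end

/-! ### Typing of λ_op-quote -/

/-- `dom` of a source handler. -/
def SHandler.dom : SHandler → Eff
  | .retH _ _ => ∅
  | .opH h o _ _ _ => insert o h.dom


/-- Typing context entries: level 0 or level −1 variables. -/
inductive SEntry : Type
  | lvl0 : Ty0 → SEntry
  | lvl1 : Ty1 → SEntry

abbrev SCtx := List SEntry

mutual
  /-- `Γ ⊢_{c|q} v : T⁰ ! Δ` (c- and q-mode value typing coincide). -/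
  inductive QVal : Sig → SCtx → SVal → Ty0 → Eff → Prop
    | var {Sg Γ i T Δ} : Γ[i]? = some (.lvl0 T) → QVal Sg Γ (.var i) T Δ
    | nat {Sg Γ m Δ} : QVal Sg Γ (.nat m) .nat Δ
    | lam {Sg Γ S T Δ ξ e} :
        QExpr Sg (SEntry.lvl0 S :: Γ) e T Δ ξ →
        QVal Sg Γ (.lam S e) (.fn S ξ T) Δ
  /-- `Γ ⊢_{c|q} e : T⁰ ! Δ;ξ`. -/
  inductive QExpr : Sig → SCtx → SExpr → Ty0 → Eff → Eff → Prop
    | app {Sg Γ S T Δ ξ v₁ v₂} :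
        QVal Sg Γ v₁ (.fn S ξ T) Δ → QVal Sg Γ v₂ S Δ →
        QExpr Sg Γ (.app v₁ v₂) T Δ ξ
    | resume {Sg Γ S T Δ ξ v₁ v₂} :
        QVal Sg Γ v₁ (.cont S ξ T) Δ → QVal Sg Γ v₂ S Δ →
        QExpr Sg Γ (.resume v₁ v₂) T Δ ξ
    | ret {Sg Γ T Δ ξ v} : QVal Sg Γ v T Δ → QExpr Sg Γ (.ret v) T Δ ξ
    | seq {Sg Γ S T Δ ξ e₁ e₂} :
        QExpr Sg Γ e₁ S Δ ξ → QExpr Sg (SEntry.lvl0 S :: Γ) e₂ T Δ ξ →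
        QExpr Sg Γ (.seq S e₁ e₂) T Δ ξ
    | op {Sg Γ Δ ξ o v} :
        QVal Sg Γ v (Sg.arg0 o) Δ → o ∈ ξ →
        QExpr Sg Γ (.op o v) (Sg.res0 o) Δ ξ
    | handle {Sg Γ S T Δ ξ₁ ξ₂ e h} :
        QExpr Sg Γ e S Δ ξ₁ → QHdl Sg Γ h S ξ₁ T ξ₂ Δ →
        (∀ o ∈ ξ₁, o ∉ ξ₂ → o ∈ h.dom) →
        QExpr Sg Γ (.handle e h) T Δ ξ₂
    | splice {Sg Γ T Δ ξ e} :
        SExprT Sg Γ e (.code T ξ) Δ →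
        QExpr Sg Γ (.splice e) T Δ ξ
  /-- `Γ ⊢_{c|q} h : (S!ξ₁ ⇒ T!ξ₂)⁰ ! Δ`. -/
  inductive QHdl : Sig → SCtx → SHandler → Ty0 → Eff → Ty0 → Eff → Eff → Prop
    | retH {Sg Γ S T ξ₁ ξ₂ Δ e} :
        QExpr Sg (SEntry.lvl0 S :: Γ) e T Δ ξ₂ →
        QHdl Sg Γ (.retH S e) S ξ₁ T ξ₂ Δ
    | opH {Sg Γ S T ξ₁ ξ₂ Δ o h e} :
        QHdl Sg Γ h S ξ₁ T ξ₂ Δ →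
        QExpr Sg (SEntry.lvl0 (Ty0.cont (Sg.res0 o) ξ₂ T) :: SEntry.lvl0 (Sg.arg0 o) :: Γ)
          e T Δ ξ₂ →
        ξ₁ ⊆ ξ₂ ∪ {o} →
        QHdl Sg Γ (.opH h o (Sg.arg0 o) (Ty0.cont (Sg.res0 o) ξ₂ T) e) S ξ₁ T ξ₂ Δ
  /-- `Γ ⊢_s v : T⁻¹`. -/
  inductive SValT : Sig → SCtx → SVal → Ty1 → Prop
    | var {Sg Γ i T} : Γ[i]? = some (.lvl1 T) → SValT Sg Γ (.var i) T
    | nat {Sg Γ m} : SValT Sg Γ (.nat m) .nat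
    | lam {Sg Γ A S T Δ e} :
        SExprT Sg (SEntry.lvl1 S :: Γ) e T Δ →
        SValT Sg Γ (.lam A e) (.fn S Δ T)
  /-- `Γ ⊢_s e : T⁻¹ ! Δ`. -/
  inductive SExprT : Sig → SCtx → SExpr → Ty1 → Eff → Prop
    | app {Sg Γ S T Δ v₁ v₂} :
        SValT Sg Γ v₁ (.fn S Δ T) → SValT Sg Γ v₂ S →
        SExprT Sg Γ (.app v₁ v₂) T Δ
    | resume {Sg Γ S T Δ v₁ v₂} :
        SValT Sg Γ v₁ (.cont S Δ T) → SValT Sg Γ v₂ S →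
        SExprT Sg Γ (.resume v₁ v₂) T Δ
    | ret {Sg Γ T Δ v} : SValT Sg Γ v T → SExprT Sg Γ (.ret v) T Δ
    | seq {Sg Γ A S T Δ e₁ e₂} :
        SExprT Sg Γ e₁ S Δ → SExprT Sg (SEntry.lvl1 S :: Γ) e₂ T Δ →
        SExprT Sg Γ (.seq A e₁ e₂) T Δ
    | op {Sg Γ Δ o v} :
        SValT Sg Γ v (Sg.arg1 o) → o ∈ Δ →
        SExprT Sg Γ (.op o v) (Sg.res1 o) Δ
    | handle {Sg Γ S T Δ₁ Δ₂ e h} :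
        SExprT Sg Γ e S Δ₁ → SHdlT Sg Γ h S Δ₁ T Δ₂ →
        (∀ o ∈ Δ₁, o ∉ Δ₂ → o ∈ h.dom) →
        SExprT Sg Γ (.handle e h) T Δ₂
    | quote {Sg Γ T Δ ξ e} :
        QExpr Sg Γ e T Δ ξ →
        SExprT Sg Γ (.quote e) (.code T ξ) Δ
  /-- `Γ ⊢_s h : (S!Δ₁ ⇒ T!Δ₂)⁻¹`. -/
  inductive SHdlT : Sig → SCtx → SHandler → Ty1 → Eff → Ty1 → Eff → Prop
    | retH {Sg Γ A S T Δ₁ Δ₂ e} :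
        SExprT Sg (SEntry.lvl1 S :: Γ) e T Δ₂ →
        SHdlT Sg Γ (.retH A e) S Δ₁ T Δ₂
    | opH {Sg Γ A B S T Δ₁ Δ₂ o h e} :
        SHdlT Sg Γ h S Δ₁ T Δ₂ →
        SExprT Sg (SEntry.lvl1 (Ty1.cont (Sg.res1 o) Δ₂ T) :: SEntry.lvl1 (Sg.arg1 o) :: Γ)
          e T Δ₂ →
        Δ₁ ⊆ Δ₂ ∪ {o} →
        SHdlT Sg Γ (.opH h o A B e) S Δ₁ T Δ₂
end

/-- Elaboration of context entries. -/
def elabEntry : SEntry → CTy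
  | .lvl0 T => .fparam (eraseTy T)
  | .lvl1 T => elabTy1 T

/-- Elaboration of typing contexts. -/
def elabCtx (Γ : SCtx) : CTCtx := Γ.map elabEntry

end MetaLang

namespace MetaLang

/-! ### Elaboration from λ_op-quote to λ_AST(op)

The elaboration is parameterised by a *flavor*: the naïve elaboration (no
checks), the lazy check, the eager check, and the C4C (Cause-for-Concern)
check, which differ only in where `check`/`checkM`/`dlet` are inserted. -/

inductive Flavor : Type
  | naive | lazy | eager | be
deriving DecidableEq

/-- How an AST construction in q-mode is returned. -/
def qWrap : Flavor → NF → Tm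
  | .naive, n => .ret n
  | .lazy, n => .ret n
  | .eager, n => .check n
  | .be, n => .checkM n

/-- How an AST construction is returned (c-mode constructions are plain). -/
def wrapC (isC : Bool) (fl : Flavor) (n : NF) : Tm :=
  if isC then .ret n else qWrap fl n

def dlets (xs : List ℕ) (t : Tm) : Tm :=
  xs.foldr (fun i s => Tm.dlet (.var i) s) t

/-- The treatment of binders: the naïve elaboration inserts nothing; the lazy
check inserts `dlet`s at c-mode binders; the eager and C4C checks additionally
insert `dlet`s followed by a `check` (resp. `checkM`) at q-mode binders. -/
def dletWrap (isC : Bool) (fl : Flavor) (xs : List ℕ) (t : Tm) : Tm :=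
  if isC then
    match fl with
    | .naive => t
    | _ => dlets xs t
  else
    match fl with
    | .naive => t
    | .lazy => t
    | .eager => .seq (dlets xs t) (.check (.var 0))
    | .be => .seq (dlets xs t) (.checkM (.var 0))

/-- The treatment of top-level splices: the lazy and eager checks `check` the
result of the top-level splice, the C4C check `checkM`s it. -/
def topWrap (fl : Flavor) (t : Tm) : Tm :=
  match fl with
  | .naive => t
  | .lazy => .seq t (.check (.var 0))
  | .eager => .seq t (.check (.var 0))
  | .be => .seq t (.checkM (.var 0))

mutual
  /-- Elaboration of values in c-mode (`isC = true`) or q-mode (`isC = false`). -/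
  def elabV (fl : Flavor) (isC : Bool) : SVal → Tm
    | .var i => wrapC isC fl (.astVar (.var i))
    | .nat m => wrapC isC fl (.astNat m)
    | .lam T e =>
        .seq (.mkvar (eraseTy T))
          (dletWrap isC fl [0]
            (.seq (elabE fl isC e) (.ret (.astLam (.var 1) (.var 0)))))
  /-- Elaboration of expressions in c-mode or q-mode. -/
  def elabE (fl : Flavor) (isC : Bool) : SExpr → Tm
    | .app v₁ v₂ =>
        .seq (elabV fl isC v₁)
          (.seq ((elabV fl isC v₂).rename Nat.succ)
            (wrapC isC fl (.astApp (.var 1) (.var 0))))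
    | .ret v => .seq (elabV fl isC v) (wrapC isC fl (.astRet (.var 0)))
    | .seq T e₁ e₂ =>
        .seq (elabE fl isC e₁)
          (.seq (.mkvar (eraseTy T))
            (dletWrap isC fl [0]
              (.seq ((elabE fl isC e₂).rename (liftR Nat.succ))
                (.ret (.astDo (.var 2) (.var 1) (.var 0))))))
    | .op o v => .seq (elabV fl isC v) (wrapC isC fl (.astOp o (.var 0)))
    | .handle e h =>
        .seq (elabE fl isC e)
          (.seq ((elabH fl isC h).rename Nat.succ)
            (wrapC isC fl (.astHwith (.var 1) (.var 0))))
    | .resume v₁ v₂ =>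
        .seq (elabV fl isC v₁)
          (.seq ((elabV fl isC v₂).rename Nat.succ)
            (wrapC isC fl (.astCont (.var 1) (.var 0))))
    | .quote e => elabE fl isC e          -- (quotes are ill-typed in c/q-mode)
    | .splice e => if isC then topWrap fl (.tls (elabEs fl e)) else elabEs fl e
  /-- Elaboration of handlers in c-mode or q-mode. -/
  def elabH (fl : Flavor) (isC : Bool) : SHandler → Tm
    | .retH T e =>
        .seq (.mkvar (eraseTy T))
          (dletWrap isC fl [0]
            (.seq (elabE fl isC e) (.ret (.astHret (.var 1) (.var 0)))))
    | .opH h o Tx Tk e =>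
        .seq (elabH fl isC h)
          (.seq (.mkvar (eraseTy Tx))
            (.seq ((.mkvar (eraseTy Tk) : Tm).rename Nat.succ)
              (dletWrap isC fl [1, 0]
                (.seq ((elabE fl isC e).rename (liftR (liftR Nat.succ)))
                  (.ret (.astHop (.var 3) o (.var 2) (.var 1) (.var 0)))))))
  /-- Elaboration of values in s-mode (essentially the identity). -/
  def elabVs (fl : Flavor) : SVal → NF
    | .var i => .var i
    | .nat m => .nat m
    | .lam _ e => .lam (elabEs fl e)
  /-- Elaboration of expressions in s-mode. -/
  def elabEs (fl : Flavor) : SExpr → Tm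
    | .app v₁ v₂ => .app (elabVs fl v₁) (elabVs fl v₂)
    | .ret v => .ret (elabVs fl v)
    | .seq _ e₁ e₂ => .seq (elabEs fl e₁) (elabEs fl e₂)
    | .op o v => .op o (elabVs fl v)
    | .handle e h => .handle (elabEs fl e) (elabHs fl h)
    | .resume v₁ v₂ => .resume (elabVs fl v₁) (elabVs fl v₂)
    | .quote e => elabE fl false e
    | .splice e => elabEs fl e            -- (splices are ill-typed in s-mode)
  /-- Elaboration of handlers in s-mode. -/
  def elabHs (fl : Flavor) : SHandler → Hd
    | .retH _ e => .retH (elabEs fl e)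
    | .opH h o _ _ e => .opH (elabHs fl h) o (elabEs fl e)
end

/-- The naïve elaboration `⟦e⟧` of a (c-mode) λ_op-quote expression. -/
def elabNaive (e : SExpr) : Tm := elabE .naive true e
/-- The lazy-check elaboration `⟦e⟧^Lazy`. -/
def elabLazy (e : SExpr) : Tm := elabE .lazy true e
/-- The eager-check elaboration `⟦e⟧^Eager`. -/
def elabEager (e : SExpr) : Tm := elabE .eager true e
/-- The C4C-check elaboration `⟦e⟧^BE`. -/
def elabBE (e : SExpr) : Tm := elabE .be true e

/-- A closed, well-typed λ_op-quote expression: it types in compile mode with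
empty compile-time and run-time effect sets. -/
def SWellTyped (Sg : Sig) (e : SExpr) : Prop :=
  ∃ T : Ty0, QExpr Sg [] e T ∅ ∅

/-- `Safe`: closed well-typed expressions whose lazy-check elaboration never
reduces to `err`. -/
def Safe (Sg : Sig) (e : SExpr) : Prop :=
  SWellTyped Sg e ∧ ¬ ReachesErr (elabLazy e)

end MetaLang

namespace MetaLang

/-! ### Auxiliary development: the unmuting map from C4C terms to eager terms -/

mutual
  def NF.un : NF → NF
    | .var n => .var n
    | .nat m => .nat m
    | .lam t => .lam t.un
    | .kont t => .kont t.un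
    | .fp a R => .fp a R
    | .astNat m => .astNat m
    | .astVar n => .astVar n.un
    | .astLam n₁ n₂ => .astLam n₁.un n₂.un
    | .astApp n₁ n₂ => .astApp n₁.un n₂.un
    | .astCont n₁ n₂ => .astCont n₁.un n₂.un
    | .astRet n => .astRet n.un
    | .astDo n₁ n₂ n₃ => .astDo n₁.un n₂.un n₃.un
    | .astOp o n => .astOp o n.un
    | .astHwith n₁ n₂ => .astHwith n₁.un n₂.un
    | .astHret n₁ n₂ => .astHret n₁.un n₂.un
    | .astHop n₁ o n₂ n₃ n₄ => .astHop n₁.un o n₂.un n₃.un n₄.un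
  def Tm.un : Tm → Tm
    | .app n₁ n₂ => .app n₁.un n₂.un
    | .ret n => .ret n.un
    | .seq t₁ t₂ => .seq t₁.un t₂.un
    | .op o n => .op o n.un
    | .handle t h => .handle t.un h.un
    | .resume n₁ n₂ => .resume n₁.un n₂.un
    | .check n => .check n.un
    | .checkM n => .check n.un
    | .mkvar R => .mkvar R
    | .dlet n t => .dlet n.un t.un
    | .tls t => .tls t.un
    | .err => .err
  def Hd.un : Hd → Hd
    | .retH t => .retH t.un
    | .opH h o t => .opH h.un o t.un
end

mutual
theorem NF.un_rename : ∀ (n : NF) (f : ℕ → ℕ), (n.rename f).un = n.un.rename f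
  | .var _, _ => rfl
  | .nat _, _ => rfl
  | .lam t, f => by simp [NF.rename, NF.un, Tm.un_rename t]
  | .kont t, f => by simp [NF.rename, NF.un, Tm.un_rename t]
  | .fp _ _, _ => rfl
  | .astNat _, _ => rfl
  | .astVar n, f => by simp [NF.rename, NF.un, NF.un_rename n]
  | .astLam n₁ n₂, f => by simp [NF.rename, NF.un, NF.un_rename n₁, NF.un_rename n₂]
  | .astApp n₁ n₂, f => by simp [NF.rename, NF.un, NF.un_rename n₁, NF.un_rename n₂]
  | .astCont n₁ n₂, f => by simp [NF.rename, NF.un, NF.un_rename n₁, NF.un_rename n₂]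
  | .astRet n, f => by simp [NF.rename, NF.un, NF.un_rename n]
  | .astDo n₁ n₂ n₃, f => by
      simp [NF.rename, NF.un, NF.un_rename n₁, NF.un_rename n₂, NF.un_rename n₃]
  | .astOp o n, f => by simp [NF.rename, NF.un, NF.un_rename n]
  | .astHwith n₁ n₂, f => by simp [NF.rename, NF.un, NF.un_rename n₁, NF.un_rename n₂]
  | .astHret n₁ n₂, f => by simp [NF.rename, NF.un, NF.un_rename n₁, NF.un_rename n₂]
  | .astHop n₁ o n₂ n₃ n₄, f => by
      simp [NF.rename, NF.un, NF.un_rename n₁, NF.un_rename n₂, NF.un_rename n₃,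
        NF.un_rename n₄]
theorem Tm.un_rename : ∀ (t : Tm) (f : ℕ → ℕ), (t.rename f).un = t.un.rename f
  | .app n₁ n₂, f => by simp [Tm.rename, Tm.un, NF.un_rename n₁, NF.un_rename n₂]
  | .ret n, f => by simp [Tm.rename, Tm.un, NF.un_rename n]
  | .seq t₁ t₂, f => by simp [Tm.rename, Tm.un, Tm.un_rename t₁, Tm.un_rename t₂]
  | .op o n, f => by simp [Tm.rename, Tm.un, NF.un_rename n]
  | .handle t h, f => by simp [Tm.rename, Tm.un, Tm.un_rename t, Hd.un_rename h]
  | .resume n₁ n₂, f => by simp [Tm.rename, Tm.un, NF.un_rename n₁, NF.un_rename n₂]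
  | .check n, f => by simp [Tm.rename, Tm.un, NF.un_rename n]
  | .checkM n, f => by simp [Tm.rename, Tm.un, NF.un_rename n]
  | .mkvar _, _ => rfl
  | .dlet n t, f => by simp [Tm.rename, Tm.un, NF.un_rename n, Tm.un_rename t]
  | .tls t, f => by simp [Tm.rename, Tm.un, Tm.un_rename t]
  | .err, _ => rfl
theorem Hd.un_rename : ∀ (h : Hd) (f : ℕ → ℕ), (h.rename f).un = h.un.rename f
  | .retH t, f => by simp [Hd.rename, Hd.un, Tm.un_rename t]
  | .opH h o t, f => by simp [Hd.rename, Hd.un, Hd.un_rename h, Tm.un_rename t]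
end

theorem un_liftS (σ : ℕ → NF) :
    (fun i => (liftS σ i).un) = liftS (fun i => (σ i).un) := by
  funext i
  cases i with
  | zero => rfl
  | succ n => simp [liftS, NF.un_rename]

mutual
theorem NF.un_subst : ∀ (n : NF) (σ : ℕ → NF),
    (n.subst σ).un = n.un.subst (fun i => (σ i).un)
  | .var _, _ => rfl
  | .nat _, _ => rfl
  | .lam t, σ => by simp [NF.subst, NF.un, Tm.un_subst t, un_liftS]
  | .kont t, σ => by simp [NF.subst, NF.un, Tm.un_subst t, un_liftS]
  | .fp _ _, _ => rfl
  | .astNat _, _ => rfl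
  | .astVar n, σ => by simp [NF.subst, NF.un, NF.un_subst n]
  | .astLam n₁ n₂, σ => by simp [NF.subst, NF.un, NF.un_subst n₁, NF.un_subst n₂]
  | .astApp n₁ n₂, σ => by simp [NF.subst, NF.un, NF.un_subst n₁, NF.un_subst n₂]
  | .astCont n₁ n₂, σ => by simp [NF.subst, NF.un, NF.un_subst n₁, NF.un_subst n₂]
  | .astRet n, σ => by simp [NF.subst, NF.un, NF.un_subst n]
  | .astDo n₁ n₂ n₃, σ => by
      simp [NF.subst, NF.un, NF.un_subst n₁, NF.un_subst n₂, NF.un_subst n₃]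
  | .astOp o n, σ => by simp [NF.subst, NF.un, NF.un_subst n]
  | .astHwith n₁ n₂, σ => by simp [NF.subst, NF.un, NF.un_subst n₁, NF.un_subst n₂]
  | .astHret n₁ n₂, σ => by simp [NF.subst, NF.un, NF.un_subst n₁, NF.un_subst n₂]
  | .astHop n₁ o n₂ n₃ n₄, σ => by
      simp [NF.subst, NF.un, NF.un_subst n₁, NF.un_subst n₂, NF.un_subst n₃,
        NF.un_subst n₄]
theorem Tm.un_subst : ∀ (t : Tm) (σ : ℕ → NF),
    (t.subst σ).un = t.un.subst (fun i => (σ i).un)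
  | .app n₁ n₂, σ => by simp [Tm.subst, Tm.un, NF.un_subst n₁, NF.un_subst n₂]
  | .ret n, σ => by simp [Tm.subst, Tm.un, NF.un_subst n]
  | .seq t₁ t₂, σ => by simp [Tm.subst, Tm.un, Tm.un_subst t₁, Tm.un_subst t₂, un_liftS]
  | .op o n, σ => by simp [Tm.subst, Tm.un, NF.un_subst n]
  | .handle t h, σ => by simp [Tm.subst, Tm.un, Tm.un_subst t, Hd.un_subst h]
  | .resume n₁ n₂, σ => by simp [Tm.subst, Tm.un, NF.un_subst n₁, NF.un_subst n₂]
  | .check n, σ => by simp [Tm.subst, Tm.un, NF.un_subst n]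
  | .checkM n, σ => by simp [Tm.subst, Tm.un, NF.un_subst n]
  | .mkvar _, _ => rfl
  | .dlet n t, σ => by simp [Tm.subst, Tm.un, NF.un_subst n, Tm.un_subst t]
  | .tls t, σ => by simp [Tm.subst, Tm.un, Tm.un_subst t]
  | .err, _ => rfl
theorem Hd.un_subst : ∀ (h : Hd) (σ : ℕ → NF),
    (h.subst σ).un = h.un.subst (fun i => (σ i).un)
  | .retH t, σ => by simp [Hd.subst, Hd.un, Tm.un_subst t, un_liftS]
  | .opH h o t, σ => by simp [Hd.subst, Hd.un, Hd.un_subst h, Tm.un_subst t, un_liftS]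
end

theorem Tm.un_subst1 (t : Tm) (n : NF) : (t.subst1 n).un = t.un.subst1 n.un := by
  unfold Tm.subst1
  rw [Tm.un_subst]
  congr 1
  funext i
  cases i <;> rfl

theorem Tm.un_subst2 (t : Tm) (nk nx : NF) :
    (t.subst2 nk nx).un = t.un.subst2 nk.un nx.un := by
  unfold Tm.subst2
  rw [Tm.un_subst]
  congr 1
  funext i
  match i with
  | 0 => rfl
  | 1 => rfl
  | i + 2 => rfl

theorem NF.un_asParam (n : NF) : n.un.asParam = n.asParam := by
  cases n <;> simp [NF.un, NF.asParam]

mutual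
theorem NF.un_fvs : ∀ n : NF, n.un.fvs = n.fvs
  | .var _ => rfl
  | .nat _ => rfl
  | .lam t => by simp [NF.un, NF.fvs, Tm.un_fvs t]
  | .kont t => by simp [NF.un, NF.fvs, Tm.un_fvs t]
  | .fp _ _ => rfl
  | .astNat _ => rfl
  | .astVar n => by simp [NF.un, NF.fvs, NF.un_fvs n, NF.un_asParam]
  | .astLam n₁ n₂ => by simp [NF.un, NF.fvs, NF.un_fvs n₂, NF.un_asParam]
  | .astApp n₁ n₂ => by simp [NF.un, NF.fvs, NF.un_fvs n₁, NF.un_fvs n₂]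
  | .astCont n₁ n₂ => by simp [NF.un, NF.fvs, NF.un_fvs n₁, NF.un_fvs n₂]
  | .astRet n => by simp [NF.un, NF.fvs, NF.un_fvs n]
  | .astDo n₁ n₂ n₃ => by
      simp [NF.un, NF.fvs, NF.un_fvs n₁, NF.un_fvs n₃, NF.un_asParam]
  | .astOp o n => by simp [NF.un, NF.fvs, NF.un_fvs n]
  | .astHwith n₁ n₂ => by simp [NF.un, NF.fvs, NF.un_fvs n₁, NF.un_fvs n₂]
  | .astHret n₁ n₂ => by simp [NF.un, NF.fvs, NF.un_fvs n₂, NF.un_asParam]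
  | .astHop n₁ o n₂ n₃ n₄ => by
      simp [NF.un, NF.fvs, NF.un_fvs n₁, NF.un_fvs n₄, NF.un_asParam]
theorem Tm.un_fvs : ∀ t : Tm, t.un.fvs = t.fvs
  | .app n₁ n₂ => by simp [Tm.un, Tm.fvs, NF.un_fvs n₁, NF.un_fvs n₂]
  | .ret n => by simp [Tm.un, Tm.fvs, NF.un_fvs n]
  | .seq t₁ t₂ => by simp [Tm.un, Tm.fvs, Tm.un_fvs t₁, Tm.un_fvs t₂]
  | .op o n => by simp [Tm.un, Tm.fvs, NF.un_fvs n]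
  | .handle t h => by simp [Tm.un, Tm.fvs, Tm.un_fvs t, Hd.un_fvs h]
  | .resume n₁ n₂ => by simp [Tm.un, Tm.fvs, NF.un_fvs n₁, NF.un_fvs n₂]
  | .check n => by simp [Tm.un, Tm.fvs, NF.un_fvs n]
  | .checkM n => by simp [Tm.un, Tm.fvs, NF.un_fvs n]
  | .mkvar _ => rfl
  | .dlet n t => by simp [Tm.un, Tm.fvs, Tm.un_fvs t, NF.un_asParam]
  | .tls t => by simp [Tm.un, Tm.fvs, Tm.un_fvs t]
  | .err => rfl
theorem Hd.un_fvs : ∀ h : Hd, h.un.fvs = h.fvs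
  | .retH t => by simp [Hd.un, Hd.fvs, Tm.un_fvs t]
  | .opH h o t => by simp [Hd.un, Hd.fvs, Hd.un_fvs h, Tm.un_fvs t]
end

theorem Hd.un_dom : ∀ h : Hd, h.un.dom = h.dom
  | .retH _ => rfl
  | .opH h o _ => by simp [Hd.un, Hd.dom, Hd.un_dom h]

theorem Hd.un_retClause : ∀ h : Hd, h.un.retClause = h.retClause.un
  | .retH _ => rfl
  | .opH h _ _ => by simp [Hd.un, Hd.retClause, Hd.un_retClause h]

theorem Hd.un_lookup : ∀ (h : Hd) (o : OpName),
    h.un.lookup o = (h.lookup o).map Tm.un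
  | .retH _, _ => rfl
  | .opH h o' t, o => by
      by_cases ho : o' = o <;> simp [Hd.un, Hd.lookup, ho, Hd.un_lookup h]

/-- Unmuting of evaluation frames. -/
def CFrame.un : CFrame → CFrame
  | .seqF t => .seqF t.un
  | .handleF h => .handleF h.un
  | .dletF a R => .dletF a R
  | .tlsF => .tlsF

theorem un_piFVs : ∀ E : CCtx, piFVs (E.map CFrame.un) = piFVs E
  | [] => rfl
  | F :: E => by cases F <;> simp [CFrame.un, piFVs, un_piFVs E]

theorem un_handledC : ∀ E : CCtx, handledC (E.map CFrame.un) = handledC E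
  | [] => rfl
  | F :: E => by cases F <;> simp [CFrame.un, handledC, un_handledC E, Hd.un_dom]

theorem un_plugCF (F : CFrame) (t : Tm) :
    (plugCF F t).un = plugCF F.un t.un := by
  cases F <;> simp [CFrame.un, plugCF, Tm.un, NF.un]

theorem un_plugC : ∀ (E : CCtx) (t : Tm),
    (plugC E t).un = plugC (E.map CFrame.un) t.un
  | [], t => rfl
  | F :: E, t => by simp [plugC, un_plugC E, un_plugCF]

/-- Unmuting of configurations. -/
def Cfg.un (k : Cfg) : Cfg := ⟨k.tm.un, k.ctx.map CFrame.un, k.used, k.muted, k.mark⟩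

/-- Simulation: every C4C step is matched by an eager step, or the eager side
errs. -/
theorem un_step {k k' : Cfg} (h : CStep k k') :
    CStep k.un k'.un ∨
      CStep k.un ⟨.err, k.ctx.map CFrame.un, k.used, k.muted, k.mark⟩ := by
  cases h with
  | @app t n E U M I =>
      left
      simp only [Cfg.un, Tm.un, NF.un, Tm.un_subst1]
      exact CStep.app
  | @seq n t E U M I =>
      left
      simp only [Cfg.un, Tm.un, NF.un, Tm.un_subst1]
      exact CStep.seq
  | @hdl n hh E U M I =>
      left
      simp only [Cfg.un, Tm.un, NF.un, Tm.un_subst1, ← Hd.un_retClause]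
      exact CStep.hdl
  | pushSeq =>
      left
      simp only [Cfg.un, Tm.un, List.map_cons, CFrame.un]
      exact CStep.pushSeq
  | pushHandle =>
      left
      simp only [Cfg.un, Tm.un, List.map_cons, CFrame.un]
      exact CStep.pushHandle
  | pushDlet =>
      left
      simp only [Cfg.un, Tm.un, NF.un, List.map_cons, CFrame.un]
      exact CStep.pushDlet
  | pushTls =>
      left
      simp only [Cfg.un, Tm.un, List.map_cons, CFrame.un]
      exact CStep.pushTls
  | popSeq =>
      left
      simp only [Cfg.un, Tm.un, List.map_cons, CFrame.un]
      exact CStep.popSeq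
  | popHandle =>
      left
      simp only [Cfg.un, Tm.un, List.map_cons, CFrame.un]
      exact CStep.popHandle
  | gen =>
      left
      simp only [Cfg.un, Tm.un, NF.un]
      exact CStep.gen
  | @chs n E U M I hsub =>
      left
      simp only [Cfg.un, Tm.un]
      exact CStep.chs (by rw [NF.un_fvs, un_piFVs]; exact hsub)
  | @chf n E U M I hsub =>
      left
      simp only [Cfg.un, Tm.un]
      exact CStep.chf (by rw [NF.un_fvs, un_piFVs]; exact hsub)
  | @cms n E U M I hsub =>
      by_cases hc : n.fvs ⊆ piFVs E
      · left
        simp only [Cfg.un, Tm.un]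
        exact CStep.chs (by rw [NF.un_fvs, un_piFVs]; exact hc)
      · right
        simp only [Cfg.un, Tm.un]
        exact CStep.chf (by rw [NF.un_fvs, un_piFVs]; exact hc)
  | @cmf n E U M I hsub =>
      right
      simp only [Cfg.un, Tm.un]
      refine CStep.chf ?_
      rw [NF.un_fvs, un_piFVs]
      intro hc
      exact hsub (fun x hx => hc hx.1)
  | tls =>
      left
      simp only [Cfg.un, Tm.un, List.map_cons, CFrame.un]
      exact CStep.tls
  | @dlt n a R E U M I =>
      left
      simp only [Cfg.un, Tm.un, List.map_cons, CFrame.un]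
      have h := CStep.dlt (n := n.un) (a := a) (R := R) (E := E.map CFrame.un)
        (U := U) (M := M) (I := I)
      simpa [List.length_map] using h
  | @op hh o n t E₁ E₂ U M I hlook hnh =>
      left
      simp only [Cfg.un, Tm.un, NF.un, List.map_append, List.map_cons, CFrame.un,
        Tm.un_subst2, un_plugC, List.length_map]
      have hlook' : hh.un.lookup o = some t.un := by
        rw [Hd.un_lookup, hlook]; rfl
      have hnh' : o ∉ handledC (E₂.map CFrame.un) := by
        rwa [un_handledC]
      have := CStep.op (h := hh.un) (o := o) (n := n.un) (t := t.un)
        (E₁.map CFrame.un) (E₂.map CFrame.un) (U := U) (M := M) (I := I)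
        hlook' hnh'
      simpa [NF.un, Tm.un, un_piFVs, List.length_map] using this
  | resume =>
      left
      simp only [Cfg.un, Tm.un, NF.un, Tm.un_subst1]
      exact CStep.resume

theorem un_steps {k k' : Cfg} (h : CSteps k k') :
    CSteps k.un k'.un ∨
      ∃ E U M I, CSteps k.un ⟨.err, E, U, M, I⟩ := by
  induction h with
  | refl => exact Or.inl .refl
  | tail _ hstep ih =>
      rcases ih with ih | ih
      · rcases un_step hstep with h' | h'
        · exact Or.inl (ih.tail h')
        · exact Or.inr ⟨_, _, _, _, ih.tail h'⟩
      · exact Or.inr ih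

theorem un_dlets (xs : List ℕ) (t : Tm) : (dlets xs t).un = dlets xs t.un := by
  induction xs with
  | nil => rfl
  | cons x xs ih => simp [dlets, Tm.un, NF.un] at *; simpa [dlets] using ih

theorem un_wrapC (isC : Bool) (n : NF) :
    (wrapC isC .be n).un = wrapC isC .eager n.un := by
  cases isC <;> rfl

theorem dletWrap_false_be (xs : List ℕ) (t : Tm) :
    dletWrap false .be xs t = .seq (dlets xs t) (.checkM (.var 0)) := rfl
theorem dletWrap_false_eager (xs : List ℕ) (t : Tm) :
    dletWrap false .eager xs t = .seq (dlets xs t) (.check (.var 0)) := rfl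
theorem dletWrap_true_be (xs : List ℕ) (t : Tm) :
    dletWrap true .be xs t = dlets xs t := rfl
theorem dletWrap_true_eager (xs : List ℕ) (t : Tm) :
    dletWrap true .eager xs t = dlets xs t := rfl

theorem un_dletWrap (isC : Bool) (xs : List ℕ) (t : Tm) :
    (dletWrap isC .be xs t).un = dletWrap isC .eager xs t.un := by
  cases isC
  · rw [dletWrap_false_be, dletWrap_false_eager]
    simp [Tm.un, NF.un, un_dlets]
  · rw [dletWrap_true_be, dletWrap_true_eager]
    exact un_dlets xs t

theorem un_topWrap (t : Tm) : (topWrap .be t).un = topWrap .eager t.un := by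
  simp [topWrap, Tm.un, NF.un]

mutual
theorem un_elabV : ∀ (isC : Bool) (v : SVal),
    (elabV .be isC v).un = elabV .eager isC v
  | isC, .var i => by
      simp [elabV, Tm.un, un_wrapC, NF.un]
  | isC, .nat m => by
      simp [elabV, Tm.un, un_wrapC, NF.un]
  | isC, .lam T e => by
      simp [elabV, Tm.un, NF.un, un_dletWrap, un_elabE isC e]
theorem un_elabE : ∀ (isC : Bool) (e : SExpr),
    (elabE .be isC e).un = elabE .eager isC e
  | isC, .app v₁ v₂ => by
      simp [elabE, Tm.un, NF.un, un_wrapC, Tm.un_rename, un_elabV isC v₁,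
        un_elabV isC v₂]
  | isC, .ret v => by
      simp [elabE, Tm.un, NF.un, un_wrapC, un_elabV isC v]
  | isC, .seq T e₁ e₂ => by
      simp [elabE, Tm.un, NF.un, un_wrapC, un_dletWrap, Tm.un_rename,
        un_elabE isC e₁, un_elabE isC e₂]
  | isC, .op o v => by
      simp [elabE, Tm.un, NF.un, un_wrapC, un_elabV isC v]
  | isC, .handle e h => by
      simp [elabE, Tm.un, NF.un, un_wrapC, Tm.un_rename, un_elabE isC e,
        un_elabH isC h]
  | isC, .resume v₁ v₂ => by
      simp [elabE, Tm.un, NF.un, un_wrapC, Tm.un_rename, un_elabV isC v₁,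
        un_elabV isC v₂]
  | isC, .quote e => by
      simpa [elabE] using un_elabE isC e
  | isC, .splice e => by
      cases isC <;> simp [elabE, Tm.un, NF.un, topWrap, un_topWrap, un_elabEs e]
theorem un_elabH : ∀ (isC : Bool) (h : SHandler),
    (elabH .be isC h).un = elabH .eager isC h
  | isC, .retH T e => by
      simp [elabH, Tm.un, NF.un, un_dletWrap, un_elabE isC e]
  | isC, .opH h o Tx Tk e => by
      simp [elabH, Tm.un, NF.un, Tm.rename, un_dletWrap, Tm.un_rename,
        un_elabH isC h, un_elabE isC e]
theorem un_elabVs : ∀ v : SVal, (elabVs .be v).un = elabVs .eager v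
  | .var i => rfl
  | .nat m => rfl
  | .lam T e => by simp [elabVs, NF.un, un_elabEs e]
theorem un_elabEs : ∀ e : SExpr, (elabEs .be e).un = elabEs .eager e
  | .app v₁ v₂ => by simp [elabEs, Tm.un, un_elabVs v₁, un_elabVs v₂]
  | .ret v => by simp [elabEs, Tm.un, un_elabVs v]
  | .seq T e₁ e₂ => by simp [elabEs, Tm.un, un_elabEs e₁, un_elabEs e₂]
  | .op o v => by simp [elabEs, Tm.un, un_elabVs v]
  | .handle e h => by simp [elabEs, Tm.un, un_elabEs e, un_elabHs h]
  | .resume v₁ v₂ => by simp [elabEs, Tm.un, un_elabVs v₁, un_elabVs v₂]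
  | .quote e => by simpa [elabEs] using un_elabE false e
  | .splice e => by simpa [elabEs] using un_elabEs e
theorem un_elabHs : ∀ h : SHandler, (elabHs .be h).un = elabHs .eager h
  | .retH T e => by simp [elabHs, Hd.un, un_elabEs e]
  | .opH h o Tx Tk e => by simp [elabHs, Hd.un, un_elabHs h, un_elabEs e]
end

theorem un_elabBE (e : SExpr) : (elabBE e).un = elabEager e :=
  un_elabE true e

end MetaLang

namespace MetaLang

/-- **The C4C check is at least as permissive as the eager check** (§4.4):
for every closed, well-typed λ_op-quote expression `e`, if the eager-check
elaboration never reaches `err`, then neither does the C4C elaboration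
(a `check_M` can never fail where the corresponding `check` succeeds). -/
theorem c4c_at_least_as_permissive (Sg : Sig) (e : SExpr) (T : Ty0)
    (hty : QExpr Sg [] e T ∅ ∅)
    (heager : ¬ ReachesErr (elabEager e)) :
    ¬ ReachesErr (elabBE e) := by
  intro hbe
  apply heager
  rcases hbe with ⟨E, U, M, I, hsteps⟩
  have h0 : (initCfg (elabBE e)).un = initCfg (elabEager e) := by
    simp [Cfg.un, initCfg, un_elabBE]
  rcases un_steps hsteps with h | ⟨E', U', M', I', h⟩
  · rw [h0] at h
    exact ⟨E.map CFrame.un, U, M, I, by simpa [Cfg.un, Tm.un] using h⟩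
  · rw [h0] at h
    exact ⟨E', U', M', I', h⟩

end MetaLang
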